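/- Let H and K be groups with K nontrivial, and suppose H satisfies a one-variable law with constants: there is a nontrivial reduced word w in the free product ℤ * H, not lying in H, with w(h) = 1 for all h ∈ H. If moreover every element of K has infinite order, then the free product H * K does not satisfy w(k) = 1 for all k ∈ K; more precisely, for any k ∈ K of infinite order, w(k) ≠ 1 in H * K. -/
import Mathlib


open Monoid

open Monoid Function

section CoprodIMap

variable {ι : Type*} {M : ι → Type*} {N : ι → Type*} [∀ i, Group (M i)] [∀ i, Group (N i)]

open Monoid.CoprodI

private def mapWordAux (φ : ∀ i, M i →* N i) (hφ : ∀ i, Function.Injective (φ i))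
    (w : Word M) : Word N where
  toList := w.toList.map fun l => ⟨l.1, φ l.1 l.2⟩
  ne_one := by
    intro l hl
    simp only [List.mem_map] at hl
    obtain ⟨l', hl', rfl⟩ := hl
    exact fun h => w.ne_one l' hl' (hφ l'.1 (h.trans (map_one _).symm))
  chain_ne := by
    rw [List.isChain_map]
    exact w.chain_ne

private lemma prod_mapWordAux (φ : ∀ i, M i →* N i) (hφ : ∀ i, Function.Injective (φ i))
    (w : Word M) :
    (mapWordAux φ hφ w).prod =
      CoprodI.lift (fun i => (CoprodI.of (M := N)).comp (φ i)) w.prod := by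
  simp only [Word.prod, mapWordAux, map_list_prod, List.map_map]
  congr 1

theorem coprodI_lift_of_injective (φ : ∀ i, M i →* N i)
    (hφ : ∀ i, Function.Injective (φ i)) :
    Function.Injective (CoprodI.lift fun i => (CoprodI.of (M := N)).comp (φ i)) := by
  letI : DecidableEq ι := Classical.decEq _
  letI : ∀ i, DecidableEq (M i) := fun i => Classical.decEq _
  letI : ∀ i, DecidableEq (N i) := fun i => Classical.decEq _
  rw [injective_iff_map_eq_one]
  intro x hx
  have hxw : Word.prod (Word.equiv x) = x := Word.equiv.symm_apply_apply x
  have hprodinj : Function.Injective (Word.prod (M := N)) :=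
    (Word.equiv (M := N)).symm.injective
  have h1 : (mapWordAux φ hφ (Word.equiv x)).prod = 1 := by
    rw [prod_mapWordAux, hxw, hx]
  have h2 : mapWordAux φ hφ (Word.equiv x) = Word.empty := hprodinj h1
  have h3 : (Word.equiv x).toList = [] := by
    have := congrArg Word.toList h2
    simpa [mapWordAux] using this
  have h4 : Word.equiv x = Word.empty := Word.ext h3
  rw [← hxw, h4, Word.prod_empty]

end CoprodIMap

section Binary

universe u v u' v'

private def FF (M : Type u) (N : Type v) : Bool → Type (max u v) :=
  fun b => cond b (ULift.{v} M) (ULift.{u} N)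

private instance FFGroup (M : Type u) (N : Type v) [Group M] [Group N] :
    ∀ b, Group (FF M N b) := fun b => by cases b <;> dsimp [FF] <;> infer_instance

variable (M : Type u) (N : Type v) [Group M] [Group N]

private def toI : Coprod M N →* CoprodI (FF M N) :=
  Coprod.lift
    ((CoprodI.of (M := FF M N) (i := true)).comp
      (MulEquiv.ulift.symm.toMonoidHom : M →* ULift.{v} M))
    ((CoprodI.of (M := FF M N) (i := false)).comp
      (MulEquiv.ulift.symm.toMonoidHom : N →* ULift.{u} N))

private def fromIcomp : ∀ b, FF M N b →* Coprod M N
  | true => Coprod.inl.comp (MulEquiv.ulift.toMonoidHom : ULift.{v} M →* M)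
  | false => Coprod.inr.comp (MulEquiv.ulift.toMonoidHom : ULift.{u} N →* N)

private def fromI : CoprodI (FF M N) →* Coprod M N :=
  CoprodI.lift (fromIcomp M N)

private lemma fromI_toI : ∀ x, fromI M N (toI M N x) = x := by
  suffices h : (fromI M N).comp (toI M N) = MonoidHom.id _ by
    intro x; exact DFunLike.congr_fun h x
  apply Coprod.hom_ext <;> ext x <;>
    simp only [toI, fromI, fromIcomp, Coprod.lift_apply_inl, Coprod.lift_apply_inr,
      MonoidHom.comp_apply, CoprodI.lift_of, MonoidHom.id_apply] <;> rfl

private lemma toI_fromI : ∀ x, toI M N (fromI M N x) = x := by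
  suffices h : (toI M N).comp (fromI M N) = MonoidHom.id _ by
    intro x; exact DFunLike.congr_fun h x
  apply CoprodI.ext_hom
  intro b
  cases b <;> ext x <;>
    simp only [toI, fromI, fromIcomp, Coprod.lift_apply_inl, Coprod.lift_apply_inr,
      MonoidHom.comp_apply, CoprodI.lift_of, MonoidHom.id_apply] <;> rfl

variable {M N} {M' : Type u'} {N' : Type v'} [Group M'] [Group N']

private def mapFF (f : M →* M') (g : N →* N') : ∀ b, FF M N b →* FF M' N' b
  | true => (MulEquiv.ulift.symm.toMonoidHom : M' →* ULift.{v'} M').comp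
      (f.comp (MulEquiv.ulift.toMonoidHom : ULift.{v} M →* M))
  | false => (MulEquiv.ulift.symm.toMonoidHom : N' →* ULift.{u'} N').comp
      (g.comp (MulEquiv.ulift.toMonoidHom : ULift.{u} N →* N))

theorem coprod_map_injective {f : M →* M'} {g : N →* N'}
    (hf : Function.Injective f) (hg : Function.Injective g) :
    Function.Injective (Coprod.map f g) := by
  have hφ : ∀ b, Function.Injective (mapFF f g b) := by
    intro b
    cases b
    · exact MulEquiv.ulift.symm.injective.comp (hg.comp MulEquiv.ulift.injective)
    · exact MulEquiv.ulift.symm.injective.comp (hf.comp MulEquiv.ulift.injective)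
  have key : Coprod.map f g =
      (fromI M' N').comp
        ((CoprodI.lift fun b => (CoprodI.of (M := FF M' N')).comp (mapFF f g b)).comp
          (toI M N)) := by
    apply Coprod.hom_ext <;> ext x <;>
      simp only [toI, fromI, fromIcomp, mapFF, Coprod.lift_apply_inl, Coprod.lift_apply_inr,
        Coprod.map_apply_inl, Coprod.map_apply_inr, MonoidHom.comp_apply, CoprodI.lift_of,
        MonoidHom.id_apply] <;> rfl
  rw [key]
  exact ((Function.LeftInverse.injective (toI_fromI M' N')).comp
    (coprodI_lift_of_injective _ hφ)).comp
    (Function.LeftInverse.injective (fromI_toI M N))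

end Binary

theorem free_group_unit_lift_injective {K : Type*} [Group K] {k : K}
    (hk : ¬ IsOfFinOrder k) :
    Function.Injective (FreeGroup.lift fun _ : Unit => k) := by
  rw [injective_iff_map_eq_one]
  intro x hx
  have hxe : FreeGroup.of () ^ (FreeGroup.freeGroupUnitEquivInt x) = x :=
    FreeGroup.freeGroupUnitEquivInt.left_inv x
  set n := FreeGroup.freeGroupUnitEquivInt x with hn
  have hkn : k ^ n = 1 := by
    rw [← hxe] at hx
    simpa using hx
  have hn0 : n = 0 := by
    by_contra h0
    apply hk
    apply isOfFinOrder_iff_pow_eq_one.mpr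
    refine ⟨n.natAbs, Int.natAbs_pos.mpr h0, ?_⟩
    rcases (by omega : ((n.natAbs : ℤ) = n) ∨ ((n.natAbs : ℤ) = -n)) with h | h
    · rw [← zpow_natCast, h, hkn]
    · rw [← zpow_natCast, h, zpow_neg, hkn, inv_one]
  rw [← hxe, hn0, zpow_zero]

theorem free_product_fails_law' {H K : Type*} [Group H] [Group K]
    (w : Monoid.Coprod (FreeGroup Unit) H) (hw1 : w ≠ 1) :
    ∀ k : K, ¬ IsOfFinOrder k →
      Monoid.Coprod.lift (FreeGroup.lift fun _ => (Monoid.Coprod.inr k))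
        (Monoid.Coprod.inl : H →* Monoid.Coprod H K) w ≠ 1 := by
  intro k hk hcon
  set φ : FreeGroup Unit →* K := FreeGroup.lift fun _ => k with hφdef
  have key : Monoid.Coprod.lift (FreeGroup.lift fun _ => (Monoid.Coprod.inr k))
        (Monoid.Coprod.inl : H →* Monoid.Coprod H K) =
      (Coprod.swap K H).comp (Coprod.map φ (MonoidHom.id H)) := by
    apply Coprod.hom_ext
    · ext u
      simp [hφdef, Coprod.lift_apply_inl, Coprod.map_apply_inl]
    · ext x
      simp [Coprod.lift_apply_inr, Coprod.map_apply_inr]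
  rw [key] at hcon
  simp only [MonoidHom.comp_apply, Coprod.swap_eq_one] at hcon
  exact hw1 (coprod_map_injective (free_group_unit_lift_injective hk)
    Function.injective_id (by rw [hcon, map_one]))


/-- Evaluation of a one-variable word with constants in `H` at an element of
`K`, inside the free product `H ∗ K`: the variable `y` goes to `k` and the
constants go to the left factor. -/
noncomputable def evalInCoprod {H K : Type*} [Group H] [Group K] (k : K) :
    Monoid.Coprod (FreeGroup Unit) H →* Monoid.Coprod H K :=
  Monoid.Coprod.lift (FreeGroup.lift fun _ => (Monoid.Coprod.inr k))
    (Monoid.Coprod.inl : H →* Monoid.Coprod H K)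

/-- If `H` satisfies a one-variable law with constants `w ∈ ℤ ∗ H`
(nontrivial, not lying in `H`, killed by every substitution of an element of
`H` for the variable), then for any group `K` and any element `k ∈ K` of
infinite order, the evaluation of `w` at `k` in the free product `H ∗ K` is
nontrivial. -/
theorem free_product_fails_law {H K : Type*} [Group H] [Group K] [Nontrivial K]
    (w : Monoid.Coprod (FreeGroup Unit) H)
    (hw1 : w ≠ 1)
    (hw2 : w ∉ Set.range (Monoid.Coprod.inr : H →* Monoid.Coprod (FreeGroup Unit) H))
    (hlaw : ∀ h : H,
      Monoid.Coprod.lift (FreeGroup.lift fun _ => h) (MonoidHom.id H) w = 1)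
    (htor : ∀ k : K, k ≠ 1 → ¬ IsOfFinOrder k) :
    ∀ k : K, ¬ IsOfFinOrder k → evalInCoprod (H := H) k w ≠ 1 := by
  intro k hk
  exact free_product_fails_law' w hw1 k hk
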